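/- arXiv:2604.19704 — 9 statements merged into one kernel-verified Lean document; each statement's English description precedes it below -/
import Mathlib

section
/- If f : ℝ → ℝ is continuous and its local Lipschitz derivative 𝕃ip f is bounded by 1 everywhere (in particular if 𝕃ip f is the characteristic function of some set), then f is 1-Lipschitz. -/
open Filter Metric Topology ENNReal

/-- The local Lipschitz derivative. -/
noncomputable def LLip {X Y : Type*} [MetricSpace X] [MetricSpace Y] (f : X → Y) (x : X) : ℝ≥0∞ :=
  ⨅ (r : ℝ) (_ : 0 < r), ⨆ (u : X) (_ : u ∈ ball x r) (v : X) (_ : v ∈ ball x r) (_ : u ≠ v),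
    ENNReal.ofReal (dist (f u) (f v) / dist u v)

theorem lipschitzWith_one_of_LLip_le_one (f : ℝ → ℝ) (hf : Continuous f)
    (h : ∀ x, LLip f x ≤ 1) : LipschitzWith 1 f := by
  -- key local estimate
  have key : ∀ ε : ℝ, 0 < ε → ∀ x : ℝ, ∃ r > 0, ∀ u v : ℝ, u ∈ ball x r → v ∈ ball x r →
      dist (f u) (f v) ≤ (1 + ε) * dist u v := by
    intro ε hε x
    have h1 : LLip f x < ENNReal.ofReal (1 + ε) := by
      refine lt_of_le_of_lt (h x) ?_
      rw [← ENNReal.ofReal_one, ENNReal.ofReal_lt_ofReal_iff (by linarith)]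
      linarith
    rw [LLip, iInf_lt_iff] at h1
    obtain ⟨r, h1⟩ := h1
    rw [iInf_lt_iff] at h1
    obtain ⟨hr0, hsup⟩ := h1
    refine ⟨r, hr0, fun u v hu hv => ?_⟩
    rcases eq_or_ne u v with rfl | huv
    · simp
    have hle : ENNReal.ofReal (dist (f u) (f v) / dist u v) < ENNReal.ofReal (1 + ε) := by
      refine lt_of_le_of_lt ?_ hsup
      refine le_iSup₂_of_le u hu ?_
      refine le_iSup₂_of_le v hv ?_
      exact le_iSup_of_le huv le_rfl
    rw [ENNReal.ofReal_lt_ofReal_iff (by linarith)] at hle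
    have hd : 0 < dist u v := dist_pos.2 huv
    rw [div_lt_iff₀ hd] at hle
    linarith
  -- global estimate with factor (1 + ε)
  have glob : ∀ ε : ℝ, 0 < ε → ∀ a b : ℝ, a ≤ b →
      dist (f b) (f a) ≤ (1 + ε) * (b - a) := by
    intro ε hε a b hab
    set S : Set ℝ := {x | x ∈ Set.Icc a b ∧ dist (f x) (f a) ≤ (1 + ε) * (x - a)} with hS
    have haS : a ∈ S := ⟨⟨le_refl a, hab⟩, by simp⟩
    have hSne : S.Nonempty := ⟨a, haS⟩
    have hSbdd : BddAbove S := ⟨b, fun x hx => hx.1.2⟩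
    have hSclosed : IsClosed S := by
      have : S = Set.Icc a b ∩ {x | dist (f x) (f a) ≤ (1 + ε) * (x - a)} := rfl
      rw [this]
      exact isClosed_Icc.inter (isClosed_le (hf.dist continuous_const)
        (continuous_const.mul (continuous_id.sub continuous_const)))
    set c := sSup S with hc
    have hcS : c ∈ S := hSclosed.csSup_mem hSne hSbdd
    have hcb : c ≤ b := csSup_le hSne (fun x hx => hx.1.2)
    have hac : a ≤ c := le_csSup hSbdd haS
    have hcbeq : c = b := by
      by_contra hne
      have hclt : c < b := lt_of_le_of_ne hcb hne
      obtain ⟨r, hr0, hloc⟩ := key ε hε c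
      set x := min b (c + r / 2) with hx
      have hcx : c < x := lt_min hclt (by linarith)
      have hxb : x ≤ b := min_le_left _ _
      have hxball : x ∈ ball c r := by
        rw [mem_ball, Real.dist_eq, abs_of_nonneg (by linarith)]
        have : x ≤ c + r / 2 := min_le_right _ _
        linarith
      have hcball : c ∈ ball c r := mem_ball_self hr0
      have h1 : dist (f x) (f c) ≤ (1 + ε) * dist x c := hloc x c hxball hcball
      have hdxc : dist x c = x - c := by
        rw [Real.dist_eq, abs_of_nonneg (by linarith)]
      have h2 : dist (f x) (f a) ≤ (1 + ε) * (x - a) := by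
        calc dist (f x) (f a) ≤ dist (f x) (f c) + dist (f c) (f a) := dist_triangle _ _ _
          _ ≤ (1 + ε) * (x - c) + (1 + ε) * (c - a) := by
              rw [hdxc] at h1; exact add_le_add h1 hcS.2
          _ = (1 + ε) * (x - a) := by ring
      have hxS : x ∈ S := ⟨⟨by linarith, hxb⟩, h2⟩
      have : x ≤ c := le_csSup hSbdd hxS
      linarith
    have := hcS.2
    rw [hcbeq] at this
    exact this
  -- conclude
  apply LipschitzWith.of_dist_le_mul
  intro x y
  rw [NNReal.coe_one, one_mul]
  wlog hxy : y ≤ x generalizing x y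
  · rw [dist_comm, dist_comm x y]; exact this y x (le_of_not_ge hxy)
  have key2 : ∀ ε : ℝ, 0 < ε → dist (f x) (f y) ≤ dist x y + ε := by
    intro ε hε
    have hd : dist x y = x - y := by
      rw [Real.dist_eq, abs_of_nonneg (by linarith)]
    set ε' := ε / (x - y + 1) with hε'
    have hxy0 : (0:ℝ) ≤ x - y := by linarith
    have hε'0 : 0 < ε' := div_pos hε (by linarith)
    have := glob ε' hε'0 y x hxy
    rw [hd]
    have hkey : (1 + ε') * (x - y) = (x - y) + ε' * (x - y) := by ring
    have hle : ε' * (x - y) ≤ ε := by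
      rw [hε', div_mul_eq_mul_div, div_le_iff₀ (by linarith)]
      nlinarith
    linarith
  have := le_of_forall_pos_le_add key2
  exact this
end

section
/- Let F be a closed subset of ℝⁿ (with Lebesgue measure). Then the following are equivalent: (i) for every x ∈ F there is a sequence of measurable sets Aₙ of positive measure shrinking to x with ℓ(F∩Aₙ)/ℓ(Aₙ) → 1; (ii) for every x ∈ F and every open neighborhood U of x, ℓ(F ∩ U) > 0. -/
open Filter Metric Topology MeasureTheory Set ENNReal

/-! If the density ratios of sets shrinking to `x` tend to `1`, then eventually `F ∩ Aₖ` has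
positive measure while `Aₖ ⊆ U`. Conversely, take small open `Bₖ` of finite measure around `x`
and let `Aₖ` be a measurable hull of `F ∩ Bₖ` inside `Bₖ`: then `F ∩ Aₖ`, `Aₖ` and `F ∩ Bₖ` all
have the same positive finite measure, so the ratio is identically `1` (and `F` need not be
measurable). -/

section QuasiDense

variable {X : Type*} [MeasurableSpace X] {μ : Measure X}

theorem measure_inter_pos_of_tendsto_measure_inter_div {ι : Type*} {la : Filter ι} [la.NeBot]
    {l : Filter X} {F U : Set X} {A : ι → Set X} (hA : Tendsto A la l.smallSets)
    (hratio : Tendsto (fun k => μ (F ∩ A k) / μ (A k)) la (𝓝 1)) (hU : U ∈ l) :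
    0 < μ (F ∩ U) := by
  obtain ⟨k, hkU, hk⟩ :=
    ((tendsto_smallSets_iff.1 hA U hU).and (hratio.eventually (eventually_gt_nhds one_pos))).exists
  have hFA : μ (F ∩ A k) ≠ 0 := by
    rintro h
    simp [h] at hk
  exact (pos_iff_ne_zero.2 hFA).trans_le (measure_mono (inter_subset_inter_right F hkU))

theorem exists_measurableSet_subset_measure_inter_eq (μ : Measure X) (F : Set X) {B : Set X}
    (hB : MeasurableSet B) :
    ∃ A, MeasurableSet A ∧ A ⊆ B ∧ μ (F ∩ A) = μ (F ∩ B) ∧ μ A = μ (F ∩ B) := by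
  set A := toMeasurable μ (F ∩ B) ∩ B
  have hFB_A : F ∩ B ⊆ F ∩ A := fun y hy => ⟨hy.1, subset_toMeasurable μ _ hy, hy.2⟩
  have hA_le : μ A ≤ μ (F ∩ B) :=
    (measure_mono inter_subset_left).trans (measure_toMeasurable _).le
  refine ⟨A, (measurableSet_toMeasurable μ _).inter hB, inter_subset_right, ?_, ?_⟩
  · exact le_antisymm ((measure_mono inter_subset_right).trans hA_le) (measure_mono hFB_A)
  · exact le_antisymm hA_le (measure_mono (hFB_A.trans inter_subset_right))

variable [TopologicalSpace X]

theorem exists_isOpen_seq_tendsto_smallSets_measure_lt_top [FirstCountableTopology X]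
    (μ : Measure X) [IsLocallyFiniteMeasure μ] (x : X) :
    ∃ B : ℕ → Set X, (∀ k, IsOpen (B k)) ∧ (∀ k, x ∈ B k) ∧ (∀ k, μ (B k) < ∞) ∧
      Tendsto B atTop (𝓝 x).smallSets := by
  obtain ⟨s, hs⟩ := (𝓝 x).exists_antitone_basis
  obtain ⟨W, hxW, hW, hμW⟩ := μ.exists_isOpen_measure_lt_top x
  refine ⟨fun k => interior (s k) ∩ W, fun k => isOpen_interior.inter hW,
    fun k => ⟨mem_interior_iff_mem_nhds.2 (hs.mem k), hxW⟩,
    fun k => (measure_mono inter_subset_right).trans_lt hμW, ?_⟩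
  refine tendsto_smallSets_iff.2 fun U hU => ?_
  filter_upwards [tendsto_smallSets_iff.1 hs.tendsto_smallSets U hU] with k hk
  exact inter_subset_left.trans (interior_subset.trans hk)

theorem exists_measurableSet_seq_tendsto_smallSets_density_eq_one [FirstCountableTopology X]
    [OpensMeasurableSpace X] [IsLocallyFiniteMeasure μ] {F : Set X} {x : X}
    (hF : ∀ U ∈ 𝓝 x, 0 < μ (F ∩ U)) :
    ∃ A : ℕ → Set X, (∀ k, MeasurableSet (A k)) ∧ (∀ k, 0 < μ (A k)) ∧
      Tendsto A atTop (𝓝 x).smallSets ∧ ∀ k, μ (F ∩ A k) / μ (A k) = 1 := by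
  obtain ⟨B, hBo, hxB, hμB, hB⟩ := exists_isOpen_seq_tendsto_smallSets_measure_lt_top μ x
  choose A hAm hAB hFA hμA using
    fun k => exists_measurableSet_subset_measure_inter_eq μ F (hBo k).measurableSet
  have hpos : ∀ k, 0 < μ (F ∩ B k) := fun k => hF _ ((hBo k).mem_nhds (hxB k))
  have hfin : ∀ k, μ (F ∩ B k) ≠ ∞ :=
    fun k => ((measure_mono inter_subset_right).trans_lt (hμB k)).ne
  refine ⟨A, hAm, fun k => hμA k ▸ hpos k, ?_, fun k => ?_⟩
  · exact hB.smallSets_mono (Eventually.of_forall hAB)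
  · rw [hFA, hμA]
    exact ENNReal.div_self (hpos k).ne' (hfin k)

end QuasiDense

theorem quasiDense_iff_general (n : ℕ) (F : Set (EuclideanSpace ℝ (Fin n))) :
    (∀ x ∈ F, ∃ A : ℕ → Set (EuclideanSpace ℝ (Fin n)),
        (∀ k, MeasurableSet (A k)) ∧ (∀ k, 0 < volume (A k)) ∧
        (∀ U ∈ 𝓝 x, ∀ᶠ k in atTop, A k ⊆ U) ∧
        Tendsto (fun k => volume (F ∩ A k) / volume (A k)) atTop (𝓝 1)) ↔
    (∀ x ∈ F, ∀ U : Set (EuclideanSpace ℝ (Fin n)), IsOpen U → x ∈ U →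
        0 < volume (F ∩ U)) := by
  constructor
  · rintro h x hx U hU hxU
    obtain ⟨A, -, -, hA, hratio⟩ := h x hx
    exact measure_inter_pos_of_tendsto_measure_inter_div (tendsto_smallSets_iff.2 hA) hratio
      (hU.mem_nhds hxU)
  · intro h x hx
    have hF : ∀ U ∈ 𝓝 x, 0 < volume (F ∩ U) :=
      (nhds_basis_opens x).forall_iff (fun U V hUV hU => hU.trans_le
        (measure_mono (inter_subset_inter_right F hUV))) |>.2 fun U ⟨hxU, hU⟩ => h x hx U hU hxU
    obtain ⟨A, hAm, hApos, hA, hdensity⟩ :=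
      exists_measurableSet_seq_tendsto_smallSets_density_eq_one hF
    refine ⟨A, hAm, hApos, tendsto_smallSets_iff.1 hA, ?_⟩
    simpa only [hdensity] using tendsto_const_nhds

theorem quasiDense_iff (n : ℕ) (F : Set (EuclideanSpace ℝ (Fin n))) (hF : IsClosed F) :
    (∀ x ∈ F, ∃ A : ℕ → Set (EuclideanSpace ℝ (Fin n)),
        (∀ k, MeasurableSet (A k)) ∧ (∀ k, 0 < volume (A k)) ∧
        (∀ U ∈ 𝓝 x, ∀ᶠ k in atTop, A k ⊆ U) ∧
        Tendsto (fun k => volume (F ∩ A k) / volume (A k)) atTop (𝓝 1)) ↔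
    (∀ x ∈ F, ∀ U : Set (EuclideanSpace ℝ (Fin n)), IsOpen U → x ∈ U →
        0 < volume (F ∩ U)) :=
  quasiDense_iff_general n F
end

section
/- The symmetric fat Cantor set 𝐂_α is quasi-dense: for every x ∈ 𝐂_α and every ε > 0, ℓ(𝐂_α ∩ (x−ε, x+ε)) > 0. -/
/-!
Every point of `fatCantor α` lies in a stage-`n` interval `I` of length at most `2⁻ⁿ`, so it
suffices that `fatCantor α ∩ I` has positive measure. Writing `S = ∑' k, 2 ^ k * α k` and `Sₙ` for
its `n`-th partial sum, `I` has length `(1 - Sₙ) / 2 ^ n`, while the later stages remove from `I`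
one gap of length `α (n + i)` from each of its `2 ^ i` descendants at depth `i`, hence at most
`(S - Sₙ) / 2 ^ n` in total. Since `S < 1`, something of positive measure is left.
-/

open Filter Metric Topology MeasureTheory Set ENNReal

/-- The endpoints of the closed interval indexed by the binary string `s` at stage `n` of the
fat Cantor construction: at stage `n + 1`, from each of the `2 ^ n` current closed intervals we
remove the open subinterval of length `α n` centered at the middle of the interval. -/
noncomputable def cantorNode (α : ℕ → ℝ) : (n : ℕ) → (Fin n → Bool) → ℝ × ℝ
  | 0, _ => (0, 1)
  | n + 1, s =>
      let p := cantorNode α n (fun i => s i.castSucc)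
      if s (Fin.last n) then ((p.1 + p.2 + α n) / 2, p.2) else (p.1, (p.1 + p.2 - α n) / 2)

/-- The symmetric fat Cantor set associated to the sequence `α` of removed lengths. -/
noncomputable def fatCantor (α : ℕ → ℝ) : Set ℝ :=
  ⋂ n, ⋃ s : Fin n → Bool, Set.Icc (cantorNode α n s).1 (cantorNode α n s).2

theorem sum_range_add_le_tsum_sub {f : ℕ → ℝ} (hf : ∀ k, 0 ≤ f k) (hs : Summable f) (n m : ℕ) :
    ∑ i ∈ Finset.range m, f (i + n) ≤ ∑' k, f k - ∑ k ∈ Finset.range n, f k := by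
  rw [← hs.sum_add_tsum_nat_add n, add_sub_cancel_left]
  exact ((summable_nat_add_iff n).2 hs).sum_le_tsum _ fun i _ => hf _

noncomputable def cantorInterval (α : ℕ → ℝ) (n : ℕ) (s : Fin n → Bool) : Set ℝ :=
  Icc (cantorNode α n s).1 (cantorNode α n s).2

noncomputable def cantorLevel (α : ℕ → ℝ) (n : ℕ) : Set ℝ :=
  ⋃ s : Fin n → Bool, cantorInterval α n s

theorem fatCantor_eq_iInter_cantorLevel (α : ℕ → ℝ) : fatCantor α = ⋂ n, cantorLevel α n := rfl

section Construction

variable {α : ℕ → ℝ}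

theorem cantorNode_snoc (n : ℕ) (s : Fin n → Bool) (b : Bool) :
    cantorNode α (n + 1) (Fin.snoc s b) =
      if b then (((cantorNode α n s).1 + (cantorNode α n s).2 + α n) / 2, (cantorNode α n s).2)
      else ((cantorNode α n s).1, ((cantorNode α n s).1 + (cantorNode α n s).2 - α n) / 2) := by
  simp only [cantorNode, Fin.snoc_last, Fin.snoc_castSucc]

theorem cantorNode_snoc_length (n : ℕ) (s : Fin n → Bool) (b : Bool) :
    (cantorNode α (n + 1) (Fin.snoc s b)).2 - (cantorNode α (n + 1) (Fin.snoc s b)).1 =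
      ((cantorNode α n s).2 - (cantorNode α n s).1 - α n) / 2 := by
  rw [cantorNode_snoc]
  cases b <;> simp only [Bool.false_eq_true, if_false, if_true] <;> ring

theorem cantorNode_length (n : ℕ) (s : Fin n → Bool) :
    (cantorNode α n s).2 - (cantorNode α n s).1 =
      (1 - ∑ k ∈ Finset.range n, 2 ^ k * α k) / 2 ^ n := by
  induction n with
  | zero => simp [cantorNode]
  | succ n ih =>
    rw [← Fin.snoc_init_self s, cantorNode_snoc_length, ih, Finset.sum_range_succ, pow_succ]
    field_simp
    ring

theorem cantorNode_length_le (hα : ∀ n, 0 ≤ α n) (n : ℕ) (s : Fin n → Bool) :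
    (cantorNode α n s).2 - (cantorNode α n s).1 ≤ (1 / 2) ^ n := by
  have hSn : 0 ≤ ∑ k ∈ Finset.range n, 2 ^ k * α k :=
    Finset.sum_nonneg fun k _ => mul_nonneg (by positivity) (hα k)
  rw [cantorNode_length, div_pow, one_pow]
  gcongr
  linarith

theorem cantorInterval_snoc_subset {n : ℕ} (hα : 0 ≤ α n) (s : Fin n → Bool) (b : Bool) :
    cantorInterval α (n + 1) (Fin.snoc s b) ⊆ cantorInterval α n s := by
  intro y hy
  simp only [cantorInterval, cantorNode_snoc] at hy ⊢
  cases b <;> simp only [Bool.false_eq_true, if_false, if_true, mem_Icc] at hy ⊢ <;>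
    constructor <;> linarith [hy.1, hy.2]

theorem cantorLevel_antitone (hα : ∀ n, 0 ≤ α n) : Antitone (cantorLevel α) := by
  refine antitone_nat_of_succ_le fun n => iUnion_subset fun t => ?_
  rw [← Fin.snoc_init_self t]
  exact (cantorInterval_snoc_subset (hα n) _ _).trans (subset_iUnion _ (Fin.init t))

theorem cantorInterval_subset_snoc_union_gap (n : ℕ) (s : Fin n → Bool) :
    cantorInterval α n s ⊆
      cantorInterval α (n + 1) (Fin.snoc s false) ∪ cantorInterval α (n + 1) (Fin.snoc s true) ∪
        Ioo (((cantorNode α n s).1 + (cantorNode α n s).2 - α n) / 2)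
          (((cantorNode α n s).1 + (cantorNode α n s).2 + α n) / 2) := by
  intro y ⟨hay, hyb⟩
  simp only [cantorInterval, cantorNode_snoc, Bool.false_eq_true, if_false, if_true, mem_union,
    mem_Icc, mem_Ioo]
  by_cases hleft : y ≤ ((cantorNode α n s).1 + (cantorNode α n s).2 - α n) / 2
  · exact Or.inl (Or.inl ⟨hay, hleft⟩)
  by_cases hright : ((cantorNode α n s).1 + (cantorNode α n s).2 + α n) / 2 ≤ y
  · exact Or.inl (Or.inr ⟨hright, hyb⟩)
  exact Or.inr ⟨not_le.1 hleft, not_le.1 hright⟩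

theorem volume_cantorInterval_diff_cantorLevel_le (hα : ∀ n, 0 ≤ α n) (j : ℕ) :
    ∀ (n : ℕ) (s : Fin n → Bool),
      volume (cantorInterval α n s \ cantorLevel α (n + j)) ≤
        ENNReal.ofReal (∑ i ∈ Finset.range j, 2 ^ i * α (n + i)) := by
  induction j with
  | zero =>
    intro n s
    simp [sdiff_eq_empty.2 (subset_iUnion (cantorInterval α n) s), cantorLevel]
  | succ j ih =>
    intro n s
    set T := ∑ i ∈ Finset.range j, 2 ^ i * α (n + 1 + i)
    have hT : 0 ≤ T := Finset.sum_nonneg fun i _ => mul_nonneg (by positivity) (hα _)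
    have hsplit : ∑ i ∈ Finset.range (j + 1), 2 ^ i * α (n + i) = T + (T + α n) := by
      simp only [Finset.sum_range_succ', T, pow_succ, add_zero, pow_zero, one_mul]
      rw [← add_assoc, ← Finset.sum_add_distrib]
      congr 1
      exact Finset.sum_congr rfl fun i _ => by rw [add_comm i 1, ← add_assoc]; ring
    set G := Ioo (((cantorNode α n s).1 + (cantorNode α n s).2 - α n) / 2)
      (((cantorNode α n s).1 + (cantorNode α n s).2 + α n) / 2)
    have hgap : volume G = ENNReal.ofReal (α n) := by
      rw [Real.volume_Ioo]
      congr 1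
      ring
    rw [hsplit, ENNReal.ofReal_add hT (add_nonneg hT (hα n)), ENNReal.ofReal_add hT (hα n), ← hgap,
      ← add_assoc n j 1, Nat.add_right_comm]
    calc volume (cantorInterval α n s \ cantorLevel α (n + 1 + j))
        ≤ volume ((cantorInterval α (n + 1) (Fin.snoc s false) \ cantorLevel α (n + 1 + j)) ∪
            (cantorInterval α (n + 1) (Fin.snoc s true) \ cantorLevel α (n + 1 + j)) ∪ G) := by
          refine measure_mono fun y ⟨hy, hyL⟩ => ?_
          rcases cantorInterval_subset_snoc_union_gap n s hy with (h | h) | h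
          exacts [Or.inl (Or.inl ⟨h, hyL⟩), Or.inl (Or.inr ⟨h, hyL⟩), Or.inr h]
      _ ≤ _ := by
          refine (measure_union_le _ _).trans ?_
          rw [← add_assoc]
          gcongr
          refine (measure_union_le _ _).trans ?_
          gcongr <;> exact ih _ _

end Construction

section Measure

variable {α : ℕ → ℝ}

theorem volume_cantorInterval_diff_fatCantor_le (hα : ∀ n, 0 ≤ α n)
    (hsum : Summable fun n => (2 : ℝ) ^ n * α n) (n : ℕ) (s : Fin n → Bool) :
    volume (cantorInterval α n s \ fatCantor α) ≤
      ENNReal.ofReal ((∑' k, 2 ^ k * α k - ∑ k ∈ Finset.range n, 2 ^ k * α k) / 2 ^ n) := by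
  rw [fatCantor_eq_iInter_cantorLevel, sdiff_iInter,
    Monotone.measure_iUnion fun i j hij => sdiff_subset_sdiff_right (cantorLevel_antitone hα hij)]
  refine iSup_le fun m => ?_
  calc volume (cantorInterval α n s \ cantorLevel α m)
      ≤ volume (cantorInterval α n s \ cantorLevel α (n + m)) :=
        measure_mono (sdiff_subset_sdiff_right (cantorLevel_antitone hα (Nat.le_add_left m n)))
    _ ≤ ENNReal.ofReal (∑ i ∈ Finset.range m, 2 ^ i * α (n + i)) :=
        volume_cantorInterval_diff_cantorLevel_le hα m n s
    _ ≤ _ := by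
        gcongr
        rw [le_div_iff₀ (by positivity), Finset.sum_mul]
        refine le_of_eq_of_le (Finset.sum_congr rfl fun i _ => ?_)
          (sum_range_add_le_tsum_sub (fun k => mul_nonneg (by positivity) (hα k)) hsum n m)
        rw [add_comm n i, pow_add]
        ring

theorem volume_fatCantor_inter_cantorInterval_pos (hα : ∀ n, 0 ≤ α n)
    (hsum : Summable fun n => (2 : ℝ) ^ n * α n) (hlt : ∑' n, (2 : ℝ) ^ n * α n < 1)
    (n : ℕ) (s : Fin n → Bool) :
    0 < volume (fatCantor α ∩ cantorInterval α n s) := by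
  have hpartial : ∑ k ∈ Finset.range n, (2 : ℝ) ^ k * α k ≤ ∑' k, 2 ^ k * α k :=
    hsum.sum_le_tsum _ fun k _ => mul_nonneg (by positivity) (hα k)
  have hdiff_lt : volume (cantorInterval α n s \ fatCantor α) < volume (cantorInterval α n s) := by
    refine (volume_cantorInterval_diff_fatCantor_le hα hsum n s).trans_lt ?_
    rw [cantorInterval, Real.volume_Icc, cantorNode_length,
      ENNReal.ofReal_lt_ofReal_iff (div_pos (by linarith) (by positivity))]
    gcongr
  rw [pos_iff_ne_zero, inter_comm]
  intro h0
  have hle := measure_le_inter_add_sdiff volume (cantorInterval α n s) (fatCantor α)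
  rw [h0, zero_add] at hle
  exact hdiff_lt.not_ge hle

end Measure

theorem fatCantor_quasiDense (α : ℕ → ℝ) (hpos : ∀ n, 0 < α n)
    (hsum : Summable (fun n => (2 : ℝ) ^ n * α n))
    (hlt : ∑' n, (2 : ℝ) ^ n * α n < 1) :
    ∀ x ∈ fatCantor α, ∀ ε > (0 : ℝ),
      0 < volume (fatCantor α ∩ Set.Ioo (x - ε) (x + ε)) := by
  have hα : ∀ n, 0 ≤ α n := fun n => (hpos n).le
  intro x hx ε hε
  obtain ⟨n, hn⟩ := exists_pow_lt_of_lt_one hε one_half_lt_one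
  obtain ⟨s, hxs⟩ := mem_iUnion.1 (mem_iInter.1 hx n)
  have hsub : cantorInterval α n s ⊆ Ioo (x - ε) (x + ε) := fun y hy => by
    rw [← Real.ball_eq_Ioo, mem_ball]
    exact (Real.dist_le_of_mem_Icc hy hxs).trans_lt ((cantorNode_length_le hα n s).trans_lt hn)
  exact (volume_fatCantor_inter_cantorInterval_pos hα hsum hlt n s).trans_le
    (measure_mono (inter_subset_inter_right _ hsub))
end

section
/- Let F ⊆ ℝ be closed and quasi-dense (for every x ∈ F and open U ∋ x, ℓ(F∩U) > 0). Fix a ∈ ℝ and define f(x) = ℓ([a,x] ∩ F) for x ≥ a and f(x) = −ℓ([x,a] ∩ F) for x < a. Then f is a monotone 1-Lipschitz function with 𝕃ip f = χ_F, the characteristic function of F. -/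
/-!
For `x ≤ y` the increment `f y - f x` is `ℓ([x, y] ∩ F)`. It lies between `0` and `y - x`, which
gives monotonicity and the Lipschitz bound, and it vanishes on the intervals that miss the closed
set `F`, so `𝕃ip f = 0` off `F`. Near `x ∈ F`, quasi-density gives `F` positive measure in every
ball `B(x, r)`, hence a Lebesgue density point `y` of `F ∩ B(x, r)`; the difference quotient of
`f` over `[y - h, y + h]` is `ℓ([y - h, y + h] ∩ F) / 2h → 1`, so `𝕃ip f x ≥ 1`.
-/

open scoped Classical
open Filter Metric Topology MeasureTheory Set ENNReal

section LLip

variable {X Y : Type*} [MetricSpace X] [MetricSpace Y] {f : X → Y}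

theorem LipschitzWith.LLip_le {K : NNReal} (hf : LipschitzWith K f) (x : X) : LLip f x ≤ K := by
  refine (iInf₂_le 1 one_pos).trans <| iSup₂_le fun u _ ↦ iSup₂_le fun v _ ↦ iSup_le fun huv ↦ ?_
  rw [ENNReal.ofReal_le_iff_le_toReal coe_ne_top, coe_toReal, div_le_iff₀ (dist_pos.2 huv)]
  exact hf.dist_le_mul u v

theorem LLip_eq_zero_of_eventually_eq {x : X} (hf : ∀ᶠ y in 𝓝 x, f y = f x) : LLip f x = 0 := by
  obtain ⟨r, hr, hball⟩ := Metric.eventually_nhds_iff_ball.1 hf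
  refine nonpos_iff_eq_zero.1 <| (iInf₂_le r hr).trans <|
    iSup₂_le fun u hu ↦ iSup₂_le fun v hv ↦ iSup_le fun _ ↦ ?_
  simp [hball u hu, hball v hv]

end LLip
theorem exists_mem_eventually_lt_measure_inter_closedBall_div
    {β : Type*} [MetricSpace β] [SecondCountableTopology β] [MeasurableSpace β] [BorelSpace β]
    [HasBesicovitchCovering β] (μ : Measure β) [IsLocallyFiniteMeasure μ] {s : Set β}
    (hs : MeasurableSet s) (hμs : μ s ≠ 0) {c : ℝ≥0∞} (hc : c < 1) :
    ∃ y ∈ s, ∀ᶠ r in 𝓝[>] 0, c < μ (s ∩ closedBall y r) / μ (closedBall y r) := by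
  have hdensity : ∀ᵐ y ∂μ.restrict s,
      Tendsto (fun r ↦ μ (s ∩ closedBall y r) / μ (closedBall y r)) (𝓝[>] 0) (𝓝 1) := by
    filter_upwards [ae_restrict_of_ae (Besicovitch.ae_tendsto_measure_inter_div_of_measurableSet
      μ hs), ae_restrict_mem hs] with y hy hys
    simpa [indicator_of_mem hys] using hy
  obtain ⟨y, hys, hy⟩ := Measure.exists_mem_of_measure_ne_zero_of_ae hμs hdensity
  exact ⟨y, hys, hy.eventually_const_lt hc⟩

theorem measureReal_Icc_inter_add {μ : Measure ℝ} [NullSingletonClass μ] [IsLocallyFiniteMeasure μ]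
    {F : Set ℝ} (hF : MeasurableSet F) {x y z : ℝ} (hxy : x ≤ y) (hyz : y ≤ z) :
    μ.real (Icc x y ∩ F) + μ.real (Icc y z ∩ F) = μ.real (Icc x z ∩ F) := by
  have hdisj : AEDisjoint μ (Icc x y ∩ F) (Icc y z ∩ F) := by
    refine measure_mono_null (fun t ⟨⟨⟨_, hty⟩, _⟩, ⟨⟨hyt, _⟩, _⟩⟩ ↦ ?_) (measure_singleton y)
    exact le_antisymm hty hyt
  rw [← measureReal_union₀ (measurableSet_Icc.inter hF).nullMeasurableSet hdisj
    (measure_inter_lt_top_of_left_ne_top measure_Icc_lt_top.ne).ne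
    (measure_inter_lt_top_of_left_ne_top measure_Icc_lt_top.ne).ne,
    ← union_inter_distrib_right, Icc_union_Icc_eq_Icc hxy hyz]

def IsVolumePrimitive (F : Set ℝ) (f : ℝ → ℝ) : Prop :=
  ∀ x y, x ≤ y → f y - f x = volume.real (Icc x y ∩ F)

theorem isVolumePrimitive_of_eq_ite {F : Set ℝ} (hF : MeasurableSet F) (a : ℝ) :
    IsVolumePrimitive F fun x ↦ if a ≤ x then (volume (Icc a x ∩ F)).toReal
      else -(volume (Icc x a ∩ F)).toReal := by
  intro x y hxy
  simp only [← measureReal_def]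
  by_cases hax : a ≤ x
  · rw [if_pos hax, if_pos (hax.trans hxy), ← measureReal_Icc_inter_add hF hax hxy]
    ring
  by_cases hay : a ≤ y
  · rw [if_neg hax, if_pos hay, ← measureReal_Icc_inter_add hF (not_le.1 hax).le hay]
    ring
  · rw [if_neg hax, if_neg hay, ← measureReal_Icc_inter_add hF hxy (not_le.1 hay).le]
    ring

namespace IsVolumePrimitive

variable {F : Set ℝ} {f : ℝ → ℝ} (hf : IsVolumePrimitive F f)
include hf

theorem monotone : Monotone f := fun x y hxy ↦
  sub_nonneg.1 <| (hf x y hxy).symm ▸ measureReal_nonneg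

theorem sub_le_sub {x y : ℝ} (hxy : x ≤ y) : f y - f x ≤ y - x := by
  rw [hf x y hxy, ← Real.volume_real_Icc_of_le hxy]
  exact measureReal_mono inter_subset_left measure_Icc_lt_top.ne

theorem lipschitzWith_one : LipschitzWith 1 f := by
  refine LipschitzWith.of_le_add_mul 1 fun x y ↦ ?_
  rw [NNReal.coe_one, one_mul, Real.dist_eq]
  rcases le_total x y with hxy | hyx
  · linarith [hf.monotone hxy, abs_nonneg (x - y)]
  · linarith [hf.sub_le_sub hyx, le_abs_self (x - y)]

theorem ofReal_dist_div_dist {x y : ℝ} (hxy : x < y) :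
    ENNReal.ofReal (dist (f x) (f y) / dist x y) = volume (Icc x y ∩ F) / volume (Icc x y) := by
  have hvol : volume (Icc x y) ≠ 0 := by simp [Real.volume_Icc, hxy]
  rw [dist_comm, Real.dist_eq, abs_of_nonneg (sub_nonneg.2 (hf.monotone hxy.le)), hf x y hxy.le,
    dist_comm, Real.dist_eq, abs_of_pos (sub_pos.2 hxy), ← Real.volume_real_Icc_of_le hxy.le,
    measureReal_def, measureReal_def, ← ENNReal.toReal_div, ENNReal.ofReal_toReal]
  exact ENNReal.div_ne_top (measure_inter_lt_top_of_left_ne_top measure_Icc_lt_top.ne).ne hvol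

theorem eventually_eq_of_notMem (hF : IsClosed F) {x : ℝ} (hx : x ∉ F) :
    ∀ᶠ y in 𝓝 x, f y = f x := by
  obtain ⟨r, hr, hball⟩ := Metric.isOpen_iff.1 hF.isOpen_compl x hx
  have hvanish : ∀ u ∈ ball x r, ∀ v ∈ ball x r, u ≤ v → f v - f u = 0 := by
    intro u hu v hv huv
    rw [hf u v huv, (subset_compl_iff_disjoint_right.1 <|
      ((convex_ball x r).ordConnected.out hu hv).trans hball).inter_eq, measureReal_empty]
  filter_upwards [ball_mem_nhds x hr] with y hy
  rcases le_total x y with hxy | hyx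
  · linarith [hvanish x (mem_ball_self hr) y hy hxy]
  · linarith [hvanish y hy x (mem_ball_self hr) hyx]

theorem one_le_LLip (hF : MeasurableSet F)
    (hq : ∀ x ∈ F, ∀ U : Set ℝ, IsOpen U → x ∈ U → 0 < volume (F ∩ U)) {x : ℝ} (hx : x ∈ F) :
    1 ≤ LLip f x := by
  refine le_iInf₂ fun r hr ↦ le_of_forall_lt fun c hc ↦ ?_
  obtain ⟨y, ⟨-, hyr⟩, hy⟩ := exists_mem_eventually_lt_measure_inter_closedBall_div volume
    (hF.inter measurableSet_ball) (hq x hx _ isOpen_ball (mem_ball_self hr)).ne' hc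
  have hsmall : ∀ᶠ h in 𝓝[>] (0 : ℝ), closedBall y h ⊆ ball x r :=
    nhdsWithin_le_nhds (eventually_closedBall_subset (isOpen_ball.mem_nhds hyr))
  obtain ⟨h, hch, hhr, hh⟩ := (hy.and (hsmall.and self_mem_nhdsWithin)).exists
  have hmem : ∀ t ∈ Icc (y - h) (y + h), t ∈ ball x r := fun t ht ↦
    hhr (Real.closedBall_eq_Icc ▸ ht)
  calc c < volume (F ∩ ball x r ∩ closedBall y h) / volume (closedBall y h) := hch
    _ ≤ volume (Icc (y - h) (y + h) ∩ F) / volume (Icc (y - h) (y + h)) := by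
      rw [Real.closedBall_eq_Icc]
      gcongr ?_ / _
      exact measure_mono fun t ht ↦ ⟨ht.2, ht.1.1⟩
    _ = ENNReal.ofReal (dist (f (y - h)) (f (y + h)) / dist (y - h) (y + h)) :=
      (hf.ofReal_dist_div_dist (by linarith [hh])).symm
    _ ≤ _ := by
      refine le_iSup₂_of_le (y - h) (hmem _ ⟨le_rfl, ?_⟩) <|
        le_iSup₂_of_le (y + h) (hmem _ ⟨?_, le_rfl⟩) <| le_iSup_of_le ?_ le_rfl
      all_goals linarith [hh]

end IsVolumePrimitive

theorem IsVolumePrimitive.LLip_eq {F : Set ℝ} {f : ℝ → ℝ} (hf : IsVolumePrimitive F f)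
    (hF : IsClosed F) (hq : ∀ x ∈ F, ∀ U : Set ℝ, IsOpen U → x ∈ U → 0 < volume (F ∩ U))
    (x : ℝ) : LLip f x = if x ∈ F then 1 else 0 := by
  split_ifs with hx
  · exact le_antisymm (by simpa using hf.lipschitzWith_one.LLip_le x)
      (hf.one_le_LLip hF.measurableSet hq hx)
  · exact LLip_eq_zero_of_eventually_eq (hf.eventually_eq_of_notMem hF hx)

theorem qDense_monotone_LLip_one (F : Set ℝ) (hF : IsClosed F)
    (hq : ∀ x ∈ F, ∀ U : Set ℝ, IsOpen U → x ∈ U → 0 < volume (F ∩ U))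
    (a : ℝ)
    (f : ℝ → ℝ)
    (hf : f = fun x => if a ≤ x then (volume (Set.Icc a x ∩ F)).toReal
      else -(volume (Set.Icc x a ∩ F)).toReal) :
    Monotone f ∧ LipschitzWith 1 f ∧
      ∀ x, LLip f x = (if x ∈ F then 1 else 0) := by
  have hprim : IsVolumePrimitive F f := hf ▸ isVolumePrimitive_of_eq_ite hF.measurableSet a
  exact ⟨hprim.monotone, hprim.lipschitzWith_one, hprim.LLip_eq hF hq⟩
end

section
/- Let G ⊆ ℝᴺ be open and connected and f : G → ℝ Lipschitz with 𝕃ip f(x) = 0 for Lebesgue-almost every x ∈ G. Then f is constant on G. -/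
/-!
At almost every point of `G` the function `f` is differentiable (Rademacher), and there the norm
of its derivative is bounded by `LLipOn f G`, so the derivative vanishes almost everywhere.
By Fubini, for a fixed vector `v` almost every line parallel to `v` meets the exceptional set in a
null set; along such a line `f` is Lipschitz, hence absolutely continuous with zero derivative
almost everywhere, hence constant. So `f p = f (p + v)` for almost every, and by continuity every,
`p` in a convex neighbourhood, i.e. `f` is locally constant, and connectedness of `G` concludes.
-/

open Filter Metric Topology MeasureTheory Set ENNReal

/-- The local Lipschitz derivative of `f` relative to the set `G`. -/
noncomputable def LLipOn {X Y : Type*} [MetricSpace X] [MetricSpace Y]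
    (f : X → Y) (G : Set X) (x : X) : ℝ≥0∞ :=
  ⨅ (r : ℝ) (_ : 0 < r),
    ⨆ (u : X) (_ : u ∈ ball x r ∩ G) (v : X) (_ : v ∈ ball x r ∩ G) (_ : u ≠ v),
      ENNReal.ofReal (dist (f u) (f v) / dist u v)

section Normed

variable {E F : Type*} [NormedAddCommGroup E] [NormedSpace ℝ E]
  [NormedAddCommGroup F] [NormedSpace ℝ F] {f : E → F} {K : NNReal}

theorem HasFDerivAt.ofReal_norm_le_LLipOn {f' : E →L[ℝ] F} {G : Set E} {x : E}
    (hf : HasFDerivAt f f' x) (hG : G ∈ 𝓝 x) : ENNReal.ofReal ‖f'‖ ≤ LLipOn f G x := by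
  refine le_iInf₂ fun r hr => ?_
  set S := ⨆ (u : E) (_ : u ∈ ball x r ∩ G) (v : E) (_ : v ∈ ball x r ∩ G) (_ : u ≠ v),
    ENNReal.ofReal (dist (f u) (f v) / dist u v)
  rcases eq_top_or_lt_top S with hS | hS
  · simp [S, hS]
  have hlip : LipschitzOnWith S.toNNReal f (ball x r ∩ G) := by
    refine LipschitzOnWith.of_dist_le_mul fun u hu v hv => ?_
    rcases eq_or_ne u v with rfl | huv
    · simp
    have hquot : ENNReal.ofReal (dist (f u) (f v) / dist u v) ≤ S :=
      le_iSup₂_of_le u hu <| le_iSup₂_of_le v hv <| le_iSup_of_le huv le_rfl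
    rw [← div_le_iff₀ (dist_pos.2 huv)]
    exact (ENNReal.ofReal_le_iff_le_toReal hS.ne).1 hquot
  calc ENNReal.ofReal ‖f'‖ ≤ ENNReal.ofReal S.toNNReal :=
        ENNReal.ofReal_le_ofReal (hf.le_of_lipschitzOn (inter_mem (ball_mem_nhds x hr) hG) hlip)
    _ = S := by simp [hS.ne]

theorem HasFDerivAt.eq_zero_of_LLipOn_eq_zero {f' : E →L[ℝ] F} {G : Set E} {x : E}
    (hf : HasFDerivAt f f' x) (hG : G ∈ 𝓝 x) (h : LLipOn f G x = 0) : f' = 0 := by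
  have hle := hf.ofReal_norm_le_LLipOn hG
  rwa [h, nonpos_iff_eq_zero, ENNReal.ofReal_eq_zero, norm_le_zero_iff] at hle

theorem LipschitzOnWith.apply_add_eq_of_ae_hasFDerivAt_zero {s : Set E}
    (hf : LipschitzOnWith K f s) {p v : E} (hs : MapsTo (fun t : ℝ => p + t • v) (Icc 0 1) s)
    (hd : ∀ᵐ t : ℝ, t ∈ Icc 0 1 → HasFDerivAt f (0 : E →L[ℝ] F) (p + t • v)) :
    f p = f (p + v) := by
  have hline : LipschitzWith ‖v‖₊ fun t : ℝ => p + t • v := by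
    refine LipschitzWith.of_dist_le_mul fun s t => ?_
    simp [dist_eq_norm, ← sub_smul, norm_smul, mul_comm]
  have hg : LipschitzOnWith (K * ‖v‖₊) (fun t : ℝ => f (p + t • v)) (uIcc 0 1) := by
    rw [uIcc_of_le zero_le_one]
    exact hf.comp hline.lipschitzOnWith hs
  obtain ⟨C, hC⟩ := hg.absolutelyContinuousOnInterval.const_of_ae_hasDerivAt_zero <| by
    filter_upwards [hd] with t ht ht01
    rw [uIcc_of_le zero_le_one] at ht01
    simpa [Function.comp_def] using
      (ht ht01).comp_hasDerivAt t (((hasDerivAt_id t).smul_const v).const_add p)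
  simpa using (hC 0 (by simp)).trans (hC 1 (by simp)).symm

variable [MeasurableSpace E] [BorelSpace E] [FiniteDimensional ℝ E]
  {μ : Measure E} [μ.IsAddHaarMeasure]

theorem LipschitzOnWith.ae_hasFDerivAt_zero_of_LLipOn [FiniteDimensional ℝ F] {G : Set E}
    (hf : LipschitzOnWith K f G) (hG : IsOpen G)
    (h : ∀ᵐ x ∂μ, x ∈ G → LLipOn f G x = 0) :
    ∀ᵐ x ∂μ, x ∈ G → HasFDerivAt f (0 : E →L[ℝ] F) x := by
  filter_upwards [h, hf.ae_differentiableWithinAt_of_mem] with x hx hdiff hxG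
  have hfx := ((hdiff hxG).differentiableAt (hG.mem_nhds hxG)).hasFDerivAt
  rwa [← hfx.eq_zero_of_LLipOn_eq_zero (hG.mem_nhds hxG) (hx hxG)]

theorem ae_ae_add_smul_of_ae {P : E → Prop} (h : ∀ᵐ x ∂μ, P x) (v : E) :
    ∀ᵐ p ∂μ, ∀ᵐ t : ℝ, P (p + t • v) := by
  obtain ⟨s, hs_ae, hs_meas, hsP⟩ := h.exists_measurable_mem
  filter_upwards [(ae_ae_add_linearMap_mem_iff (LinearMap.toSpanSingleton ℝ E v) volume μ
    hs_meas).2 hs_ae] with p hp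
  filter_upwards [hp] with t ht using hsP _ ht

theorem Convex.is_const_of_ae_hasFDerivAt_zero {U : Set E} (hconv : Convex ℝ U)
    (hU : IsOpen U) (hf : LipschitzOnWith K f U)
    (hd : ∀ᵐ x ∂μ, x ∈ U → HasFDerivAt f (0 : E →L[ℝ] F) x)
    {x y : E} (hx : x ∈ U) (hy : y ∈ U) : f x = f y := by
  set v := y - x
  set W := U ∩ (· + v) ⁻¹' U
  have hW : IsOpen W := hU.inter (hU.preimage (continuous_add_const v))
  have hseg : ∀ p ∈ W, MapsTo (fun t : ℝ => p + t • v) (Icc 0 1) U :=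
    fun p hp _ ht => hconv.add_smul_mem hp.1 hp.2 ht
  have hae : ∀ᵐ p ∂μ, p ∈ W → f p = f (p + v) := by
    filter_upwards [ae_ae_add_smul_of_ae hd v] with p hp hpW
    refine hf.apply_add_eq_of_ae_hasFDerivAt_zero (hseg p hpW) ?_
    filter_upwards [hp] with t ht ht01 using ht (hseg p hpW ht01)
  have hfW : ContinuousOn f W := hf.continuousOn.mono inter_subset_left
  have hfvW : ContinuousOn (fun p => f (p + v)) W :=
    hf.continuousOn.comp (continuous_add_const v).continuousOn fun _ hp => hp.2
  have hxW : x ∈ W := ⟨hx, by simpa [v] using hy⟩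
  simpa [v] using
    Measure.eqOn_open_of_ae_eq ((ae_restrict_iff' hW.measurableSet).2 hae) hW hfW hfvW hxW

end Normed

theorem IsPreconnected.apply_eq_of_eventually_eq {X Y : Type*} [TopologicalSpace X] {s : Set X}
    (hs : IsPreconnected s) {f : X → Y} (hf : ∀ x ∈ s, ∀ᶠ y in 𝓝 x, f y = f x)
    {x y : X} (hx : x ∈ s) (hy : y ∈ s) : f x = f y := by
  have := isPreconnected_iff_preconnectedSpace.1 hs
  have hloc : IsLocallyConstant (s.domRestrict f) := (IsLocallyConstant.iff_eventually_eq _).2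
    fun z => (continuous_subtype_val.tendsto z).eventually (hf z z.2)
  exact hloc.apply_eq_of_preconnectedSpace ⟨x, hx⟩ ⟨y, hy⟩

theorem const_of_LLip_ae_zero (N : ℕ) (G : Set (EuclideanSpace ℝ (Fin N)))
    (hG : IsOpen G) (hc : IsConnected G)
    (f : EuclideanSpace ℝ (Fin N) → ℝ) (K : NNReal) (hf : LipschitzOnWith K f G)
    (h : ∀ᵐ x, x ∈ G → LLipOn f G x = 0) :
    ∀ x ∈ G, ∀ y ∈ G, f x = f y := by
  have hd := hf.ae_hasFDerivAt_zero_of_LLipOn (μ := volume) hG h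
  intro x hx y hy
  refine hc.isPreconnected.apply_eq_of_eventually_eq (fun z hz => ?_) hx hy
  obtain ⟨r, hr, hrG⟩ := Metric.isOpen_iff.1 hG z hz
  filter_upwards [ball_mem_nhds z hr] with w hw
  refine (convex_ball z r).is_const_of_ae_hasFDerivAt_zero (μ := volume) isOpen_ball
    (hf.mono hrG) ?_ hw (mem_ball_self hr)
  filter_upwards [hd] with u hu hur using hu (hrG hur)
end

section
/- If F ⊆ ℝᴺ is a local Lipschitz one set (there exists continuous f : ℝᴺ → ℝ with 𝕃ip f = χ_F), then F is quasi-dense: for every x ∈ F and open neighborhood U of x, ℓ_N(F ∩ U) > 0. -/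
/-!
Suppose `F ∩ U` were null. By Fubini, almost every segment parallel to a given one meets
`F ∩ U` in a null set of times, which an open set `V` of small length covers. Along such a segment
the local Lipschitz constant of `f` is at most `1` on `V` and `0` off it, so a continuity induction
bounds the increment of `f` by the integral of the lower semicontinuous weight `ε + 𝟙_V`, which
is arbitrarily small. Hence `f (w + d) = f w` for almost every `w`, and by continuity for every `w`
near `x`: `f` is constant near `x`, so `𝕃ip f x = 0`, contradicting `x ∈ F`.
-/

open scoped Classical
open Filter Metric Topology MeasureTheory Set ENNReal

open scoped NNReal

theorem le_of_forall_pos_le_add_mul {x y c : ℝ} (h : ∀ ε > 0, x ≤ y + ε * c) : x ≤ y := by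
  have hlim : Tendsto (fun ε : ℝ => y + ε * c) (𝓝 0) (𝓝 (y + 0 * c)) :=
    tendsto_const_nhds.add (tendsto_id.mul_const c)
  rw [zero_mul, add_zero] at hlim
  exact ge_of_tendsto (hlim.mono_left (nhdsWithin_le_nhds (s := Ioi 0)))
    (eventually_nhdsWithin_of_forall h)

section LLip

variable {X Y : Type*} [MetricSpace X] [MetricSpace Y] {f : X → Y}

theorem eventually_dist_le_of_LLip_lt {y : X} {K : ℝ} (hK : LLip f y < ENNReal.ofReal K) :
    ∀ᶠ u in 𝓝 y, dist (f u) (f y) ≤ K * dist u y := by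
  obtain ⟨r, hr, hsup⟩ : ∃ r > 0, (⨆ (u : X) (_ : u ∈ ball y r) (v : X) (_ : v ∈ ball y r)
      (_ : u ≠ v), ENNReal.ofReal (dist (f u) (f v) / dist u v)) < ENNReal.ofReal K := by
    simpa only [LLip, iInf_lt_iff, exists_prop] using hK
  filter_upwards [ball_mem_nhds y hr] with u hu
  rcases eq_or_ne u y with rfl | hne
  · simp
  have hlt : ENNReal.ofReal (dist (f u) (f y) / dist u y) < ENNReal.ofReal K :=
    (le_iSup₂_of_le u hu <| le_iSup₂_of_le y (mem_ball_self hr) <|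
      by exact le_iSup_of_le hne le_rfl).trans_lt hsup
  rw [← div_le_iff₀ (dist_pos.2 hne)]
  exact ((ENNReal.ofReal_lt_ofReal_iff_of_nonneg (by positivity)).1 hlt).le

theorem LLip_le_of_forall_dist_le {x : X} {r K : ℝ} (hr : 0 < r)
    (h : ∀ u ∈ ball x r, ∀ v ∈ ball x r, dist (f u) (f v) ≤ K * dist u v) :
    LLip f x ≤ ENNReal.ofReal K :=
  iInf₂_le_of_le r hr <| iSup₂_le fun u hu => iSup₂_le fun v hv => iSup_le fun huv =>
    ENNReal.ofReal_le_ofReal <| (div_le_iff₀ (dist_pos.2 huv)).2 (h u hu v hv)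

end LLip

theorem eventually_abs_sub_le_along_line_of_LLip_lt {E : Type*} [NormedAddCommGroup E]
    [NormedSpace ℝ E] {f : E → ℝ} {w d : E} {t K : ℝ} (hd : d ≠ 0)
    (hK : LLip f (w + t • d) < ENNReal.ofReal (K / ‖d‖)) :
    ∀ᶠ s in 𝓝[>] t, |f (w + s • d) - f (w + t • d)| ≤ K * (s - t) := by
  have hline : Tendsto (fun s : ℝ => w + s • d) (𝓝 t) (𝓝 (w + t • d)) :=
    (by fun_prop : Continuous fun s : ℝ => w + s • d).tendsto t
  filter_upwards [nhdsWithin_le_nhds (hline.eventually (eventually_dist_le_of_LLip_lt hK)),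
    self_mem_nhdsWithin] with s hs hts
  have hdist : dist (w + s • d) (w + t • d) = (s - t) * ‖d‖ := by
    rw [dist_add_left, dist_eq_norm, ← sub_smul, norm_smul,
      Real.norm_of_nonneg (sub_nonneg.2 (le_of_lt hts))]
  rw [hdist, Real.dist_eq] at hs
  calc _ ≤ K / ‖d‖ * ((s - t) * ‖d‖) := hs
    _ = K * (s - t) := by field_simp [norm_ne_zero_iff.2 hd]

theorem abs_sub_le_sub_of_eventually_abs_sub_le {h φ : ℝ → ℝ} {a b : ℝ} (hab : a ≤ b)
    (hh : ContinuousOn h (Icc a b)) (hφ : ContinuousOn φ (Icc a b))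
    (hstep : ∀ t ∈ Ico a b, ∀ᶠ s in 𝓝[>] t, |h s - h t| ≤ φ s - φ t) :
    |h b - h a| ≤ φ b - φ a := by
  let S := {t | |h t - h a| ≤ φ t - φ a}
  have hclosed : IsClosed (S ∩ Icc a b) := by
    rw [inter_comm]
    exact isClosed_Icc.isClosed_le ((hh.sub continuousOn_const).abs)
      (hφ.sub continuousOn_const)
  have hS : Icc a b ⊆ S := by
    refine hclosed.Icc_subset_of_forall_mem_nhdsWithin (by simp [S]) fun t ⟨hts, ht⟩ => ?_
    filter_upwards [hstep t ht] with s hs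
    have hts : |h t - h a| ≤ φ t - φ a := hts
    show |h s - h a| ≤ φ s - φ a
    linarith [abs_sub_le (h s) (h t) (h a)]
  exact hS (right_mem_Icc.2 hab)

theorem abs_sub_le_integral_of_eventually_abs_sub_le {h K : ℝ → ℝ} {a b : ℝ} (hab : a ≤ b)
    (hh : ContinuousOn h (Icc a b)) (hK : LowerSemicontinuous K)
    (hKi : IntervalIntegrable K volume a b)
    (hloc : ∀ t ∈ Ico a b, ∀ᶠ s in 𝓝[>] t, |h s - h t| ≤ K t * (s - t)) :
    |h b - h a| ≤ ∫ t in a..b, K t := by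
  refine le_of_forall_pos_le_add_mul (c := b - a) fun η hη => ?_
  have hint : ∀ c ∈ Icc a b, ∀ d ∈ Icc a b, IntervalIntegrable K volume c d := fun c hc d hd =>
    hKi.mono_set (uIcc_subset_uIcc (by rwa [uIcc_of_le hab]) (by rwa [uIcc_of_le hab]))
  have hprim : ContinuousOn (fun s => ∫ r in a..s, K r) (Icc a b) := by
    simpa [uIcc_of_le hab] using
      intervalIntegral.continuousOn_primitive_interval' hKi left_mem_uIcc
  -- the slack `η * s` absorbs the drop `K r > K t - η` that lower semicontinuity allows near `t`
  have key := abs_sub_le_sub_of_eventually_abs_sub_le (φ := fun s => (∫ r in a..s, K r) + η * s)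
    hab hh (hprim.add (by fun_prop)) fun t ht => ?_
  · rw [intervalIntegral.integral_same] at key
    linarith
  obtain ⟨δ, hδ, hball⟩ := Metric.eventually_nhds_iff_ball.1 (hK t (K t - η) (by linarith))
  filter_upwards [hloc t ht, Ioo_mem_nhdsGT (lt_min ht.2 (by linarith : t < t + δ))]
    with s hs ⟨hts, hsb⟩
  have hs_mem : s ∈ Icc a b := ⟨by linarith [ht.1], (hsb.trans_le (min_le_left _ _)).le⟩
  have hlow : (K t - η) * (s - t) ≤ ∫ r in t..s, K r := by
    have := intervalIntegral.integral_mono_on hts.le intervalIntegrable_const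
      (hint t (Ico_subset_Icc_self ht) s hs_mem) fun r hr => (hball r ?_).le
    · rw [intervalIntegral.integral_const, smul_eq_mul] at this
      linarith
    rw [mem_ball, Real.dist_eq, abs_lt]
    constructor <;> linarith [hr.1, hr.2, min_le_right b (t + δ)]
  have hsplit := intervalIntegral.integral_add_adjacent_intervals
    (hint a (left_mem_Icc.2 hab) t (Ico_subset_Icc_self ht))
    (hint t (Ico_subset_Icc_self ht) s hs_mem)
  nlinarith

theorem eq_of_eventually_abs_sub_le {h : ℝ → ℝ} {a b : ℝ} {L : ℝ≥0} {T : Set ℝ} (hab : a ≤ b)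
    (hh : ContinuousOn h (Icc a b)) (hT : volume T = 0)
    (hL : ∀ t ∈ Ico a b, ∀ K > (L : ℝ), ∀ᶠ s in 𝓝[>] t, |h s - h t| ≤ K * (s - t))
    (h0 : ∀ t ∈ Ico a b, t ∉ T → ∀ K > 0, ∀ᶠ s in 𝓝[>] t, |h s - h t| ≤ K * (s - t)) :
    h b = h a := by
  suffices |h b - h a| ≤ 0 from sub_eq_zero.1 (abs_nonpos_iff.1 this)
  refine le_of_forall_pos_le_add_mul (c := b - a + L) fun ε hε => ?_
  obtain ⟨V, hTV, hV, hVε⟩ :=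
    Set.exists_isOpen_lt_of_lt (μ := volume) T (ENNReal.ofReal ε) (by simpa [hT] using hε)
  let K : ℝ → ℝ := fun t => ε + V.indicator (fun _ => (L : ℝ)) t
  have hKi : IntervalIntegrable (V.indicator fun _ => (L : ℝ)) volume a b :=
    ⟨intervalIntegrable_const.1.indicator hV.measurableSet,
      intervalIntegrable_const.2.indicator hV.measurableSet⟩
  have hint : ∫ t in a..b, V.indicator (fun _ => (L : ℝ)) t ≤ ε * L := by
    rw [intervalIntegral.integral_of_le hab, integral_indicator_const _ hV.measurableSet,
      measureReal_restrict_apply hV.measurableSet, smul_eq_mul]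
    have hVfin : volume V ≠ ⊤ := (hVε.trans ENNReal.ofReal_lt_top).ne
    have : volume.real (V ∩ Ioc a b) ≤ ε := (measureReal_mono inter_subset_left hVfin).trans
      (ENNReal.toReal_le_of_le_ofReal hε.le hVε.le)
    exact mul_le_mul_of_nonneg_right this L.2
  have key := abs_sub_le_integral_of_eventually_abs_sub_le (K := K) hab hh
    (lowerSemicontinuous_const.add (hV.lowerSemicontinuous_indicator L.2))
    (intervalIntegrable_const.add hKi) fun t ht => ?_
  · rw [intervalIntegral.integral_add intervalIntegrable_const hKi, intervalIntegral.integral_const,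
      smul_eq_mul] at key
    linarith
  by_cases htV : t ∈ V
  · simpa [K, htV, add_comm] using hL t ht (ε + L) (by linarith)
  · simpa [K, htV] using h0 t ht (fun htT => htV (hTV htT)) ε hε

section Segment

variable {E : Type*} [NormedAddCommGroup E] [NormedSpace ℝ E]

theorem apply_add_eq_of_LLip_le_of_LLip_eq_zero {f : E → ℝ} (hf : Continuous f) {L : ℝ≥0}
    {G : Set E} {w d : E} (hL : ∀ t ∈ Icc (0 : ℝ) 1, LLip f (w + t • d) ≤ L)
    (h0 : ∀ t ∈ Icc (0 : ℝ) 1, w + t • d ∉ G → LLip f (w + t • d) = 0)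
    (hG : volume {t : ℝ | w + t • d ∈ G} = 0) :
    f (w + d) = f w := by
  rcases eq_or_ne d 0 with rfl | hd
  · simp
  have hd' : 0 < ‖d‖ := norm_pos_iff.2 hd
  have key := eq_of_eventually_abs_sub_le (h := fun t => f (w + t • d)) (L := L * ‖d‖₊)
    zero_le_one (hf.comp (by fun_prop)).continuousOn hG
    (fun t ht K hK => eventually_abs_sub_le_along_line_of_LLip_lt hd <|
      (hL t (Ico_subset_Icc_self ht)).trans_lt <| by
        rw [ENNReal.coe_lt_ofReal, lt_div_iff₀ hd']
        simpa using hK)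
    (fun t ht htG K hK => eventually_abs_sub_le_along_line_of_LLip_lt hd <| by
      rw [h0 t (Ico_subset_Icc_self ht) htG]
      exact ENNReal.ofReal_pos.2 (div_pos hK hd'))
  simpa using key

variable [MeasurableSpace E] [BorelSpace E]

theorem ae_volume_setOf_add_smul_mem_eq_zero {μ : Measure E} [SFinite μ] [μ.IsAddRightInvariant]
    {G : Set E} (hG : μ G = 0) (d : E) :
    ∀ᵐ w ∂μ, volume {t : ℝ | w + t • d ∈ G} = 0 := by
  let A := {p : E × ℝ | p.1 + p.2 • d ∈ toMeasurable μ G}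
  have hA : MeasurableSet A := (measurableSet_toMeasurable μ G).preimage
    (by fun_prop : Continuous fun p : E × ℝ => p.1 + p.2 • d).measurable
  have hA0 : μ.prod volume A = 0 := by
    have hslice : ∀ t : ℝ, μ ((· + t • d) ⁻¹' toMeasurable μ G) = 0 := fun t => by
      rw [measure_preimage_add_right, measure_toMeasurable, hG]
    rw [Measure.prod_apply_symm hA]
    exact (lintegral_congr hslice).trans lintegral_zero
  filter_upwards [(Measure.measure_prod_null hA).1 hA0] with w hw
  exact measure_mono_null (fun t ht => subset_toMeasurable μ G ht) hw

theorem apply_eq_of_LLip_eq_zero_off_null [FiniteDimensional ℝ E] (μ : Measure E)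
    [μ.IsAddHaarMeasure] {f : E → ℝ} (hf : Continuous f) {x : E} {r : ℝ} {L : ℝ≥0} {G : Set E}
    (hG : μ G = 0) (hL : ∀ y ∈ ball x (2 * r), LLip f y ≤ L)
    (h0 : ∀ y ∈ ball x (2 * r), y ∉ G → LLip f y = 0)
    {u v : E} (hu : u ∈ ball x r) (hv : v ∈ ball x r) :
    f v = f u := by
  have hseg : ∀ w ∈ ball u r, ∀ t ∈ Icc (0 : ℝ) 1, w + t • (v - u) ∈ ball x (2 * r) := by
    intro w hw t ht
    have hut := (convex_ball x r).add_smul_sub_mem hu hv ht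
    rw [mem_ball] at hw hut ⊢
    calc dist (w + t • (v - u)) x = ‖(u + t • (v - u) - x) + (w - u)‖ := by
          rw [dist_eq_norm]; congr 1; abel
      _ ≤ ‖u + t • (v - u) - x‖ + ‖w - u‖ := norm_add_le _ _
      _ < 2 * r := by rw [← dist_eq_norm, ← dist_eq_norm]; linarith
  have hae : ∀ᵐ w ∂μ.restrict (ball u r), f (w + (v - u)) = f w := by
    filter_upwards [ae_restrict_mem measurableSet_ball,
      ae_restrict_of_ae (ae_volume_setOf_add_smul_mem_eq_zero hG (v - u))] with w hw hnull
    exact apply_add_eq_of_LLip_le_of_LLip_eq_zero hf (fun t ht => hL _ (hseg w hw t ht))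
      (fun t ht => h0 _ (hseg w hw t ht)) hnull
  simpa using Measure.eqOn_open_of_ae_eq hae isOpen_ball (by fun_prop) (by fun_prop)
    (mem_ball_self (pos_of_mem_ball hu))

end Segment

theorem qDense_of_localLipschitzOne (N : ℕ) (F : Set (EuclideanSpace ℝ (Fin N)))
    (f : EuclideanSpace ℝ (Fin N) → ℝ) (hc : Continuous f)
    (h : ∀ x, LLip f x = (if x ∈ F then 1 else 0)) :
    ∀ x ∈ F, ∀ U : Set (EuclideanSpace ℝ (Fin N)), IsOpen U → x ∈ U →
      0 < volume (F ∩ U) := by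
  intro x hxF U hU hxU
  refine pos_iff_ne_zero.2 fun hnull => ?_
  obtain ⟨R, hR, hRU⟩ := Metric.isOpen_iff.1 hU x hxU
  have hball : ball x (2 * (R / 2)) ⊆ U := by rwa [mul_div_cancel₀ R two_ne_zero]
  have hconst : ∀ u ∈ ball x (R / 2), ∀ v ∈ ball x (R / 2), f v = f u := fun u hu v hv =>
    apply_eq_of_LLip_eq_zero_off_null volume hc hnull (L := 1)
      (fun y _ => by rw [h y]; split_ifs <;> simp)
      (fun y hy hyFU => by rw [h y, if_neg fun hyF => hyFU ⟨hyF, hball hy⟩]) hu hv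
  have hx : LLip f x ≤ ENNReal.ofReal 0 :=
    LLip_le_of_forall_dist_le (half_pos hR) fun u hu v hv => by simp [hconst u hu v hv]
  simp [h x, hxF] at hx
end

section
/- Let F be a nonempty, nowhere dense subset of ℝ² that is a local Lipschitz one set (there exists continuous f : ℝ² → ℝ with 𝕃ip f = χ_F). Then ℝ² \ F is disconnected. -/
open scoped Classical
open Filter Metric Topology MeasureTheory Set ENNReal

/-- 1D local-to-global Lipschitz estimate via a sSup argument. -/
lemma oneD_chain {g : ℝ → ℝ} {L : ℝ}
    (hloc : ∀ t ∈ Icc (0:ℝ) 1, ∃ δ > 0, ∀ s ∈ Icc (0:ℝ) 1, ∀ s' ∈ Icc (0:ℝ) 1,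
      |s - t| < δ → |s' - t| < δ → dist (g s) (g s') ≤ L * dist s s') :
    dist (g 1) (g 0) ≤ L := by
  set A : Set ℝ := {t | t ∈ Icc (0:ℝ) 1 ∧ dist (g t) (g 0) ≤ L * t} with hA
  have hA0 : (0:ℝ) ∈ A := by
    constructor
    · exact ⟨le_refl 0, zero_le_one⟩
    · simp
  have hbdd : BddAbove A := ⟨1, fun t ht => ht.1.2⟩
  set c := sSup A with hc
  have hc1 : c ≤ 1 := csSup_le ⟨0, hA0⟩ (fun t ht => ht.1.2)
  have hc0 : (0:ℝ) ≤ c := le_csSup hbdd hA0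
  obtain ⟨δ, hδ, H⟩ := hloc c ⟨hc0, hc1⟩
  have hcA : c ∈ A := by
    obtain ⟨t, htA, htlt⟩ := exists_lt_of_lt_csSup ⟨0, hA0⟩ (by linarith : c - δ < c)
    have htc : t ≤ c := le_csSup hbdd htA
    have h1 : dist (g c) (g t) ≤ L * dist c t := by
      refine H c ⟨hc0, hc1⟩ t htA.1 (by simp [hδ]) ?_
      rw [abs_lt]; constructor <;> linarith
    have hdist : dist c t = c - t := by rw [Real.dist_eq, abs_of_nonneg]; linarith
    refine ⟨⟨hc0, hc1⟩, ?_⟩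
    calc dist (g c) (g 0) ≤ dist (g c) (g t) + dist (g t) (g 0) := dist_triangle _ _ _
      _ ≤ L * (c - t) + L * t := by rw [hdist] at h1; linarith [htA.2]
      _ = L * c := by ring
  rcases eq_or_lt_of_le hc1 with heq | hlt
  · have := hcA.2
    rw [heq] at this
    simpa using this
  · exfalso
    set t := min 1 (c + δ/2) with ht
    have htc : c < t := lt_min hlt (by linarith)
    have ht0 : (0:ℝ) ≤ t := le_trans hc0 htc.le
    have ht1 : t ≤ 1 := min_le_left _ _
    have htδ : |t - c| < δ := by
      have : t ≤ c + δ/2 := min_le_right _ _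
      rw [abs_lt]; constructor <;> linarith
    have h1 : dist (g t) (g c) ≤ L * dist t c := H t ⟨ht0, ht1⟩ c ⟨hc0, hc1⟩ htδ (by simp [hδ])
    have hdist : dist t c = t - c := by rw [Real.dist_eq, abs_of_nonneg]; linarith
    have htA : t ∈ A := by
      refine ⟨⟨ht0, ht1⟩, ?_⟩
      calc dist (g t) (g 0) ≤ dist (g t) (g c) + dist (g c) (g 0) := dist_triangle _ _ _
        _ ≤ L * (t - c) + L * c := by rw [hdist] at h1; linarith [hcA.2]
        _ = L * t := by ring
    exact absurd (le_csSup hbdd htA) (not_le.mpr htc)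

theorem compl_disconnected_of_nowhereDense_LLip_one (F : Set (EuclideanSpace ℝ (Fin 2)))
    (hne : F.Nonempty) (hnd : interior (closure F) = ∅)
    (f : EuclideanSpace ℝ (Fin 2) → ℝ) (hc : Continuous f)
    (h : ∀ x, LLip f x = (if x ∈ F then 1 else 0)) :
    ¬ IsPreconnected Fᶜ := by
  intro hpre
  -- Step C: quantitative local Lipschitz smallness off F
  have keyC : ∀ x ∉ F, ∀ ε > (0:ℝ), ∃ r > (0:ℝ), ∀ u ∈ ball x r, ∀ v ∈ ball x r,
      dist (f u) (f v) ≤ ε * dist u v := by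
    intro x hx ε hε
    have h0 : LLip f x < ENNReal.ofReal ε := by
      rw [h x, if_neg hx]; exact ENNReal.ofReal_pos.mpr hε
    rw [LLip, iInf_lt_iff] at h0
    obtain ⟨r, hr⟩ := h0
    rw [iInf_lt_iff] at hr
    obtain ⟨hr0, hS⟩ := hr
    refine ⟨r, hr0, fun u hu v hv => ?_⟩
    rcases eq_or_ne u v with rfl | huv
    · simp [mul_nonneg hε.le dist_nonneg]
    · have hle : ENNReal.ofReal (dist (f u) (f v) / dist u v) < ENNReal.ofReal ε := by
        refine lt_of_le_of_lt ?_ hS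
        apply le_iSup_of_le u
        apply le_iSup_of_le hu
        apply le_iSup_of_le v
        apply le_iSup_of_le hv
        exact le_iSup_of_le huv le_rfl
      have := (ENNReal.ofReal_lt_ofReal_iff hε).mp hle
      have hd : (0:ℝ) < dist u v := dist_pos.mpr huv
      have := (div_lt_iff₀ hd).mp this
      linarith
  -- Step B: Fᶜ is open
  have hopen : IsOpen Fᶜ := by
    rw [Metric.isOpen_iff]
    intro x hx
    have h0 : LLip f x < 1 := by rw [h x, if_neg hx]; exact zero_lt_one
    rw [LLip, iInf_lt_iff] at h0
    obtain ⟨r, hr⟩ := h0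
    rw [iInf_lt_iff] at hr
    obtain ⟨hr0, hS⟩ := hr
    refine ⟨r/2, half_pos hr0, fun y hy => ?_⟩
    intro hyF
    have hsub : ball y (r/2) ⊆ ball x r := by
      intro z hz
      rw [mem_ball] at hz hy ⊢
      calc dist z x ≤ dist z y + dist y x := dist_triangle _ _ _
        _ < r/2 + r/2 := add_lt_add hz hy
        _ = r := by ring
    have hle : LLip f y < 1 := by
      refine lt_of_le_of_lt ?_ hS
      refine le_trans (iInf_le_of_le (r/2) (iInf_le _ (half_pos hr0))) ?_
      refine iSup_le fun u => iSup_le fun hu => iSup_le fun v => iSup_le fun hv =>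
        iSup_le fun hne' => ?_
      apply le_iSup_of_le u
      apply le_iSup_of_le (hsub hu)
      apply le_iSup_of_le v
      apply le_iSup_of_le (hsub hv)
      exact le_iSup_of_le hne' le_rfl
    rw [h y, if_pos hyF] at hle
    exact lt_irrefl _ hle
  -- Step D: f is constant on balls contained in Fᶜ
  have hconst : ∀ (x₀ : EuclideanSpace ℝ (Fin 2)) (R : ℝ), ball x₀ R ⊆ Fᶜ →
      ∀ u ∈ ball x₀ R, ∀ v ∈ ball x₀ R, f u = f v := by
    intro x₀ R hsub u hu v hv
    have key : ∀ ε > (0:ℝ), dist (f u) (f v) ≤ ε * dist u v := by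
      intro ε hε
      set g : ℝ → ℝ := fun t => f (AffineMap.lineMap u v t) with hg
      have hseg : ∀ t ∈ Icc (0:ℝ) 1, AffineMap.lineMap u v t ∈ ball x₀ R := by
        intro t ht
        have : AffineMap.lineMap u v t ∈ segment ℝ u v := by
          rw [segment_eq_image_lineMap]; exact ⟨t, ht, rfl⟩
        exact (convex_ball x₀ R).segment_subset hu hv this
      have hloc : ∀ t ∈ Icc (0:ℝ) 1, ∃ δ > 0, ∀ s ∈ Icc (0:ℝ) 1, ∀ s' ∈ Icc (0:ℝ) 1,
          |s - t| < δ → |s' - t| < δ → dist (g s) (g s') ≤ (ε * dist u v) * dist s s' := by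
        intro t ht
        have hw : AffineMap.lineMap u v t ∈ ball x₀ R := hseg t ht
        obtain ⟨r, hr0, hr⟩ := keyC _ (hsub hw) ε hε
        set d := dist u v with hd
        have hd0 : (0:ℝ) ≤ d := dist_nonneg
        refine ⟨r / (d + 1), by positivity, fun s hs s' hs' hst hs't => ?_⟩
        have hmem : ∀ s'' : ℝ, |s'' - t| < r / (d + 1) →
            AffineMap.lineMap u v s'' ∈ ball (AffineMap.lineMap u v t) r := by
          intro s'' hs''
          rw [mem_ball, dist_lineMap_lineMap, Real.dist_eq]
          calc |s'' - t| * d ≤ |s'' - t| * (d + 1) := by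
                apply mul_le_mul_of_nonneg_left (by linarith) (abs_nonneg _)
            _ < (r / (d + 1)) * (d + 1) := by
                apply mul_lt_mul_of_pos_right hs'' (by linarith)
            _ = r := by field_simp
        have h1 := hr _ (hmem s hst) _ (hmem s' hs't)
        rw [dist_lineMap_lineMap] at h1
        calc dist (g s) (g s') ≤ ε * (dist s s' * d) := h1
          _ = (ε * d) * dist s s' := by ring
      have := oneD_chain hloc
      have hg1 : g 1 = f v := by simp [hg]
      have hg0 : g 0 = f u := by simp [hg]
      rw [hg1, hg0, dist_comm] at this
      exact this
    have h0 : dist (f u) (f v) ≤ 0 := by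
      refine le_of_forall_pos_le_add fun ε hε => ?_
      have hd0 : (0:ℝ) ≤ dist u v := dist_nonneg
      have := key (ε / (dist u v + 1)) (by positivity)
      calc dist (f u) (f v) ≤ (ε / (dist u v + 1)) * dist u v := this
        _ ≤ (ε / (dist u v + 1)) * (dist u v + 1) := by
            apply mul_le_mul_of_nonneg_left (by linarith) (by positivity)
        _ = ε := by field_simp
        _ = 0 + ε := by ring
    exact dist_le_zero.mp h0
  -- Fᶜ is nonempty
  have hcne : Fᶜ.Nonempty := by
    rw [nonempty_compl]
    intro hF
    rw [hF] at hnd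
    simp at hnd
  obtain ⟨a, ha⟩ := hcne
  -- f is constant on Fᶜ
  have hflc : ∀ y ∈ Fᶜ, f y = f a := by
    set g : (Fᶜ : Set (EuclideanSpace ℝ (Fin 2))) → ℝ := fun y => f y with hgdef
    have hg : IsLocallyConstant g := by
      rw [IsLocallyConstant.iff_exists_open]
      intro x
      obtain ⟨R, hR0, hball⟩ := Metric.isOpen_iff.mp hopen x x.2
      refine ⟨Subtype.val ⁻¹' ball (x : EuclideanSpace ℝ (Fin 2)) R,
        isOpen_ball.preimage continuous_subtype_val, mem_ball_self hR0, fun y hy => ?_⟩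
      exact hconst _ R hball y hy x (mem_ball_self hR0)
    intro y hy
    exact hg.apply_eq_of_isPreconnected
      ((Subtype.preconnectedSpace hpre).isPreconnected_univ) (x := ⟨y, hy⟩)
      (y := ⟨a, ha⟩) (mem_univ _) (mem_univ _)
  -- f is constant everywhere, by density
  have hdense : closure Fᶜ = univ := by
    apply eq_univ_of_subset (closure_mono (compl_subset_compl.mpr subset_closure))
    rw [closure_compl, hnd, compl_empty]
  have hfa : ∀ y, f y = f a := by
    intro y
    have hsubC : closure Fᶜ ⊆ {y | f y = f a} :=
      closure_minimal hflc (isClosed_eq hc continuous_const)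
    exact hsubC (hdense ▸ mem_univ y)
  -- contradiction at a point of F
  obtain ⟨x₀, hx₀⟩ := hne
  have h1 : LLip f x₀ = 1 := by rw [h x₀, if_pos hx₀]
  have h0 : LLip f x₀ ≤ 0 := by
    refine le_trans (iInf_le_of_le 1 (iInf_le _ one_pos)) ?_
    refine iSup_le fun u => iSup_le fun _ => iSup_le fun v => iSup_le fun _ =>
      iSup_le fun _ => ?_
    simp [hfa u, hfa v]
  rw [h1] at h0
  exact absurd h0 (by simp)
end

section
/- Let C ⊆ ℝ be a fat Cantor set (closed, nowhere dense, quasi-dense, of positive measure). Then C × C ⊆ ℝ² is quasi-dense with respect to 2-dimensional Lebesgue measure, but C × C is not a local Lipschitz one set, since ℝ² \ (C × C) is connected. -/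
/-!
In coordinates the set is `C ×ˢ C ⊆ ℝ × ℝ`, and planar Lebesgue measure is the product measure, so
quasi-density passes to the square through product boxes. Its complement is connected: any point
of it lies on a line `{t} × ℝ` or `ℝ × {t}` with `t ∉ C`, and every such line meets the cross
`{t₀} × ℝ ∪ ℝ × {t₀}` for a fixed `t₀ ∉ C`. If `LLip f` vanished off `C ×ˢ C`, then `f` would have
derivative `0` on this connected open set, hence be constant there, hence constant everywhere by
density of the complement and continuity; but then `LLip f = 0` on `C ×ˢ C` as well.
-/

open scoped Classical
open Filter Metric Topology MeasureTheory Set ENNReal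

section LLip

variable {X Y : Type*} [MetricSpace X] [MetricSpace Y]

theorem LLip_const (y : Y) (x : X) : LLip (fun _ => y) x = 0 := by
  refine le_antisymm (iInf₂_le_of_le 1 one_pos ?_) bot_le
  simp

theorem exists_forall_dist_le_of_LLip_lt {f : X → Y} {x : X} {c : ℝ}
    (h : LLip f x < ENNReal.ofReal c) :
    ∃ r > 0, ∀ u ∈ ball x r, ∀ v ∈ ball x r, dist (f u) (f v) ≤ c * dist u v := by
  obtain ⟨r, hr, hsup⟩ := by simpa only [LLip, iInf_lt_iff] using h
  refine ⟨r, hr, fun u hu v hv => ?_⟩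
  rcases eq_or_ne u v with rfl | huv
  · simp
  have hquot : ENNReal.ofReal (dist (f u) (f v) / dist u v) < ENNReal.ofReal c :=
    (le_iSup₂_of_le u hu <| le_iSup₂_of_le v hv <| le_iSup (fun _ : u ≠ v => _) huv).trans_lt hsup
  rw [← div_le_iff₀ (dist_pos.2 huv)]
  exact ((ENNReal.ofReal_lt_ofReal_iff'.1 hquot).1).le

end LLip

theorem hasFDerivAt_zero_of_LLip_eq_zero {𝕜 E F : Type*} [NontriviallyNormedField 𝕜]
    [NormedAddCommGroup E] [NormedSpace 𝕜 E] [NormedAddCommGroup F] [NormedSpace 𝕜 F]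
    {f : E → F} {x : E} (h : LLip f x = 0) : HasFDerivAt f (0 : E →L[𝕜] F) x := by
  refine hasFDerivAt_iff_isLittleO.2 <| Asymptotics.isLittleO_iff.2 fun c hc => ?_
  obtain ⟨r, hr, hlip⟩ := exists_forall_dist_le_of_LLip_lt (c := c) (h ▸ ENNReal.ofReal_pos.2 hc)
  filter_upwards [ball_mem_nhds x hr] with u hu
  simpa [dist_eq_norm] using hlip u hu x (mem_ball_self hr)

theorem exists_eq_const_of_LLip_eq_zero_on_compl {E F : Type*} [NormedAddCommGroup E]
    [NormedSpace ℝ E] [NormedAddCommGroup F] [NormedSpace ℝ F] {T : Set E} (hT : IsClosed T)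
    (hTc : IsPreconnected Tᶜ) (hint : interior T = ∅) {f : E → F} (hf : Continuous f)
    (hLLip : ∀ x ∉ T, LLip f x = 0) : ∃ a, f = fun _ => a := by
  have hder : ∀ x ∈ Tᶜ, HasFDerivAt f (0 : E →L[ℝ] F) x := fun x hx =>
    hasFDerivAt_zero_of_LLip_eq_zero (hLLip x hx)
  obtain ⟨a, ha⟩ := hT.isOpen_compl.exists_is_const_of_fderiv_eq_zero hTc
    (fun x hx => (hder x hx).differentiableAt.differentiableWithinAt)
    (fun x hx => (hder x hx).fderiv)
  exact ⟨a, hf.ext_on (interior_eq_empty_iff_dense_compl.1 hint) continuous_const ha⟩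

theorem isConnected_compl_prod {X Y : Type*} [TopologicalSpace X] [TopologicalSpace Y]
    [PreconnectedSpace X] [PreconnectedSpace Y] {s : Set X} {t : Set Y} (hs : s ≠ univ)
    (ht : t ≠ univ) : IsConnected (s ×ˢ t)ᶜ := by
  obtain ⟨a, ha⟩ := (ne_univ_iff_exists_notMem s).1 hs
  obtain ⟨b, hb⟩ := (ne_univ_iff_exists_notMem t).1 ht
  have hcross_subset : ∀ x ∉ s, ∀ y ∉ t, {x} ×ˢ univ ∪ univ ×ˢ {y} ⊆ (s ×ˢ t)ᶜ :=
    fun x hx y hy => union_subset (fun p hp hst => hx (hp.1 ▸ hst.1))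
      (fun p hp hst => hy (hp.2 ▸ hst.2))
  have hcross_preconnected : ∀ (x : X) (y : Y), IsPreconnected ({x} ×ˢ univ ∪ univ ×ˢ {y}) :=
    fun x y => (isPreconnected_singleton.prod isPreconnected_univ).union (x, y) (by simp)
      (by simp) (isPreconnected_univ.prod isPreconnected_singleton)
  refine ⟨⟨(a, b), fun hab => ha hab.1⟩, isPreconnected_of_forall (a, b) fun p hp => ?_⟩
  rcases not_and_or.1 (mem_prod.not.1 hp) with hp1 | hp2
  · exact ⟨_, hcross_subset p.1 hp1 b hb, by simp, by simp, hcross_preconnected p.1 b⟩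
  · exact ⟨_, hcross_subset a ha p.2 hp2, by simp, by simp, hcross_preconnected a p.2⟩

def QuasiDense {X : Type*} [TopologicalSpace X] [MeasurableSpace X] (μ : Measure X)
    (s : Set X) : Prop :=
  ∀ x ∈ s, ∀ U : Set X, IsOpen U → x ∈ U → 0 < μ (s ∩ U)

namespace QuasiDense

variable {X Y : Type*} [TopologicalSpace X] [MeasurableSpace X] [TopologicalSpace Y]
  [MeasurableSpace Y] {μ : Measure X} {ν : Measure Y} {s : Set X} {t : Set Y}

theorem prod [SFinite ν] (hs : QuasiDense μ s) (ht : QuasiDense ν t) :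
    QuasiDense (μ.prod ν) (s ×ˢ t) := by
  rintro ⟨x, y⟩ ⟨hx, hy⟩ W hW hxyW
  obtain ⟨U, V, hU, hV, hxU, hyV, hUV⟩ := isOpen_prod_iff.1 hW x y hxyW
  calc 0 < μ (s ∩ U) * ν (t ∩ V) :=
        ENNReal.mul_pos (hs x hx U hU hxU).ne' (ht y hy V hV hyV).ne'
    _ = μ.prod ν ((s ∩ U) ×ˢ (t ∩ V)) := (Measure.prod_prod _ _).symm
    _ ≤ μ.prod ν (s ×ˢ t ∩ W) :=
        measure_mono fun p hp => ⟨⟨hp.1.1, hp.2.1⟩, hUV ⟨hp.1.2, hp.2.2⟩⟩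

theorem preimage [BorelSpace X] [BorelSpace Y] (e : X ≃ₜ Y) (he : MeasurePreserving e μ ν)
    (ht : QuasiDense ν t) : QuasiDense μ (e ⁻¹' t) := by
  intro x hx U hU hxU
  have hpos := ht (e x) hx (e.symm ⁻¹' U) (hU.preimage e.symm.continuous) (by simpa)
  rwa [← (show MeasurePreserving e.toMeasurableEquiv μ ν from he).measure_preimage_equiv,
    preimage_inter, Homeomorph.toMeasurableEquiv_coe, ← preimage_comp, e.symm_comp_self,
    preimage_id] at hpos

end QuasiDense

noncomputable def euclideanPlaneHomeomorphProd : EuclideanSpace ℝ (Fin 2) ≃ₜ ℝ × ℝ :=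
  (EuclideanSpace.equiv (Fin 2) ℝ).toHomeomorph.trans Homeomorph.finTwoArrow

theorem measurePreserving_euclideanPlaneHomeomorphProd :
    MeasurePreserving euclideanPlaneHomeomorphProd volume volume :=
  (volume_preserving_finTwoArrow ℝ).comp
    (EuclideanSpace.volume_preserving_symm_measurableEquiv_toLp (Fin 2))

theorem cantor_square_quasiDense_not_LLip_one (C : Set ℝ) (hC : IsClosed C)
    (hnd : interior C = ∅) (hpos : 0 < volume C)
    (hq : ∀ x ∈ C, ∀ U : Set ℝ, IsOpen U → x ∈ U → 0 < volume (C ∩ U)) :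
    (∀ p ∈ {q : EuclideanSpace ℝ (Fin 2) | q 0 ∈ C ∧ q 1 ∈ C},
        ∀ U : Set (EuclideanSpace ℝ (Fin 2)), IsOpen U → p ∈ U →
          0 < volume ({q : EuclideanSpace ℝ (Fin 2) | q 0 ∈ C ∧ q 1 ∈ C} ∩ U)) ∧
      IsConnected {q : EuclideanSpace ℝ (Fin 2) | q 0 ∈ C ∧ q 1 ∈ C}ᶜ ∧
      ¬ ∃ f : EuclideanSpace ℝ (Fin 2) → ℝ, Continuous f ∧
          ∀ x, LLip f x = (if x ∈ {q : EuclideanSpace ℝ (Fin 2) | q 0 ∈ C ∧ q 1 ∈ C}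
            then 1 else 0) := by
  set e := euclideanPlaneHomeomorphProd
  have hCu : C ≠ univ := fun h => by simp [h] at hnd
  have hconn : IsConnected (e ⁻¹' (C ×ˢ C))ᶜ :=
    e.isConnected_preimage.2 (isConnected_compl_prod hCu hCu)
  have hqd : QuasiDense volume C := hq
  refine ⟨(hqd.prod hqd).preimage e measurePreserving_euclideanPlaneHomeomorphProd, hconn, ?_⟩
  rintro ⟨f, hf, hLLip⟩
  have hint : interior (e ⁻¹' (C ×ˢ C)) = ∅ := by
    rw [← e.preimage_interior, interior_prod_eq, hnd, empty_prod, preimage_empty]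
  obtain ⟨a, rfl⟩ := exists_eq_const_of_LLip_eq_zero_on_compl
    ((hC.prod hC).preimage e.continuous) hconn.isPreconnected hint hf
    fun x hx => (hLLip x).trans (if_neg hx)
  obtain ⟨c, hc⟩ := nonempty_of_measure_ne_zero hpos.ne'
  have hcc : e.symm (c, c) ∈ e ⁻¹' (C ×ˢ C) := by
    rw [mem_preimage, e.apply_symm_apply]
    exact ⟨hc, hc⟩
  exact zero_ne_one ((LLip_const a _).symm.trans ((hLLip _).trans (if_pos hcc)))
end

section
/- Let X be a normed space, a ∈ X, ε > 0, and define f(x) = max{0, ε − ‖x − a‖}. Then f is 1-Lipschitz and 𝕃ip f equals the characteristic function of the closed ball B̄(a,ε): 𝕃ip f(x) = 1 if ‖x−a‖ ≤ ε and 𝕃ip f(x) = 0 if ‖x−a‖ > ε. -/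
/-!
As a truncation of the 1-Lipschitz function `ε - dist · a`, the cone is 1-Lipschitz, so
`LLip f ≤ 1` everywhere. Outside the closed ball `f` vanishes on a neighbourhood, so `LLip f = 0`.
In the closed ball, including its boundary, there are points `v ≠ x` of the closed ball arbitrarily
close to `x` with `|f v - f x| = dist v x`: points of the segment from `x` towards `a`, or, when
`x = a`, any point at small distance. Hence `LLip f x ≥ 1`.
-/

open scoped Classical
open Filter Metric Topology ENNReal

section LLip

variable {X Y : Type*} [MetricSpace X] [MetricSpace Y] {f : X → Y} {x : X}

theorem LLip_le_of_lipschitzWith {K : NNReal} (hf : LipschitzWith K f) : LLip f x ≤ K := by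
  refine iInf₂_le_of_le 1 one_pos <| iSup₂_le fun u _ => iSup₂_le fun v _ => iSup_le fun _ => ?_
  have hslope : dist (f u) (f v) / dist u v ≤ K :=
    div_le_of_le_mul₀ dist_nonneg K.coe_nonneg (hf.dist_le_mul u v)
  exact (ENNReal.ofReal_le_ofReal hslope).trans_eq ENNReal.ofReal_coe_nnreal

theorem LLip_eq_zero_of_eventuallyEq_const {c : Y} (h : f =ᶠ[𝓝 x] fun _ => c) : LLip f x = 0 := by
  obtain ⟨r, hr, hconst⟩ := eventually_nhds_iff_ball.1 h
  refine le_antisymm (iInf₂_le_of_le r hr ?_) zero_le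
  exact iSup₂_le fun u hu => iSup₂_le fun v hv => iSup_le fun _ => by
    simp [hconst u hu, hconst v hv]

theorem one_le_LLip_of_forall_exists
    (h : ∀ r > 0, ∃ u ∈ ball x r, u ≠ x ∧ dist u x ≤ dist (f u) (f x)) : 1 ≤ LLip f x := by
  refine le_iInf₂ fun r hr => ?_
  obtain ⟨u, hu, hux, hslope⟩ := h r hr
  refine le_iSup₂_of_le u hu <| le_iSup₂_of_le x (mem_ball_self hr) <| le_iSup_of_le hux ?_
  exact ENNReal.one_le_ofReal.2 ((one_le_div (dist_pos.2 hux)).2 hslope)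

end LLip

section Segment

variable {E : Type*} [NormedAddCommGroup E] [NormedSpace ℝ E]

theorem exists_ne_mem_ball_dist_add_dist_eq {x a : E} (hxa : x ≠ a) {r : ℝ} (hr : 0 < r) :
    ∃ v ∈ ball x r, v ≠ x ∧ dist v a + dist v x = dist x a := by
  have hnear : ∀ᶠ c in 𝓝[>] (0 : ℝ), AffineMap.lineMap x a c ∈ ball x r ∧ c < 1 := by
    have hcont : Tendsto (AffineMap.lineMap x a) (𝓝 (0 : ℝ)) (𝓝 x) := by
      simpa using (AffineMap.lineMap_continuous (R := ℝ) (p := x) (q := a)).tendsto 0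
    exact (hcont.eventually (ball_mem_nhds x hr)).and (gt_mem_nhds one_pos)
      |>.filter_mono nhdsWithin_le_nhds
  obtain ⟨c, ⟨hball, hc1⟩, hc0 : 0 < c⟩ := (hnear.and self_mem_nhdsWithin).exists
  refine ⟨_, hball, fun h => ?_, ?_⟩
  · have hdist := dist_lineMap_left x a c
    rw [h, dist_self, eq_comm] at hdist
    exact (mul_pos (norm_pos_iff.2 hc0.ne') (dist_pos.2 hxa)).ne' hdist
  · rw [dist_lineMap_left, dist_lineMap_right, Real.norm_of_nonneg hc0.le,
      Real.norm_of_nonneg (by linarith)]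
    ring

end Segment

section Cone

theorem lipschitzWith_one_max_zero_sub_dist {X : Type*} [MetricSpace X] (a : X) (ε : ℝ) :
    LipschitzWith 1 fun y => max 0 (ε - dist y a) := by
  simpa using ((LipschitzWith.const ε).sub (LipschitzWith.dist_left a)).const_max 0

theorem LLip_max_zero_sub_dist_eq_zero {X : Type*} [MetricSpace X] {a x : X} {ε : ℝ}
    (hx : ε < dist x a) : LLip (fun y => max 0 (ε - dist y a)) x = 0 := by
  refine LLip_eq_zero_of_eventuallyEq_const (c := 0) ?_
  filter_upwards [(isOpen_lt continuous_const (continuous_id.dist continuous_const)).mem_nhds hx]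
    with y hy
  exact max_eq_left (by linarith [show ε < dist y a from hy])

variable {E : Type*} [NormedAddCommGroup E] [NormedSpace ℝ E]

theorem exists_ne_mem_ball_mem_closedBall_dist_le_abs_dist_sub_dist [Nontrivial E] {x a : E}
    {ε r : ℝ} (hε : 0 < ε) (hx : dist x a ≤ ε) (hr : 0 < r) :
    ∃ v ∈ ball x r, v ≠ x ∧ dist v a ≤ ε ∧ dist v x ≤ |dist v a - dist x a| := by
  by_cases hxa : x = a
  · subst hxa
    have hρ : 0 < min r ε / 2 := half_pos (lt_min hr hε)
    obtain ⟨w, hw⟩ := exists_norm_eq E hρ.le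
    have hdist : dist (x + w) x = min r ε / 2 := by rw [dist_self_add_left, hw]
    refine ⟨x + w, ?_, fun h => ?_, ?_, ?_⟩
    · rw [mem_ball, hdist]
      linarith [min_le_left r ε]
    · rw [h, dist_self] at hdist
      exact hρ.ne hdist
    · rw [hdist]
      linarith [min_le_right r ε]
    · rw [hdist, dist_self, sub_zero, abs_of_pos hρ]
  · obtain ⟨v, hv, hvx, hsum⟩ := exists_ne_mem_ball_dist_add_dist_eq hxa hr
    refine ⟨v, hv, hvx, by linarith [dist_nonneg (x := v) (y := x)], ?_⟩
    rw [abs_sub_comm]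
    exact (by linarith : dist v x ≤ dist x a - dist v a).trans (le_abs_self _)

theorem one_le_LLip_max_zero_sub_dist [Nontrivial E] {a x : E} {ε : ℝ} (hε : 0 < ε)
    (hx : dist x a ≤ ε) : 1 ≤ LLip (fun y => max 0 (ε - dist y a)) x := by
  refine one_le_LLip_of_forall_exists fun r hr => ?_
  obtain ⟨v, hv, hvx, hva, hslope⟩ :=
    exists_ne_mem_ball_mem_closedBall_dist_le_abs_dist_sub_dist hε hx hr
  refine ⟨v, hv, hvx, ?_⟩
  rwa [Real.dist_eq, max_eq_right (by linarith), max_eq_right (by linarith),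
    sub_sub_sub_cancel_left (dist v a) (dist x a) ε, abs_sub_comm]

end Cone

theorem LLip_cone_eq_indicator_closedBall {X : Type*} [NormedAddCommGroup X]
    [NormedSpace ℝ X] [Nontrivial X] (a : X) (ε : ℝ) (hε : 0 < ε)
    (f : X → ℝ) (hf : f = fun x => max 0 (ε - ‖x - a‖)) :
    LipschitzWith 1 f ∧ ∀ x, LLip f x = (if ‖x - a‖ ≤ ε then 1 else 0) := by
  simp only [← dist_eq_norm] at hf ⊢
  subst hf
  refine ⟨lipschitzWith_one_max_zero_sub_dist a ε, fun x => ?_⟩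
  split_ifs with hx
  · have hle : LLip (fun y => max 0 (ε - dist y a)) x ≤ (1 : NNReal) :=
      LLip_le_of_lipschitzWith (lipschitzWith_one_max_zero_sub_dist a ε)
    exact le_antisymm (hle.trans_eq ENNReal.coe_one) (one_le_LLip_max_zero_sub_dist hε hx)
  · exact LLip_max_zero_sub_dist_eq_zero (not_le.1 hx)
end
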